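/- arXiv:1204.4829 — 7 statements merged into one kernel-verified Lean document; each statement's English description precedes it below -/
import Mathlib

section
/- Let x ∈ {0,1}^n, let b : Fin n → Fin n → ℝ be nonnegative, and let i be an index. If v_i is an upper bound for ∑_{j≠i} b i j * x'_j over all feasible x' with x'_i = 0, and l_i is a lower bound for ∑_{j≠i} b i j * x'_j over all feasible x' with x'_i = 1 (where x is feasible), then x_i * (∑_{j≠i} b i j * x_j) = max(∑_{j≠i} b i j * x_j + v_i * x_i - v_i, l_i * x_i). -/
/-- The big-M linearization of the product of a binary variable with a bounded quantity. -/
theorem binary_mul_eq_max {R : Type*} [Ring R] [LinearOrder R] [IsOrderedRing R] {t s v l : R}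
    (ht : t = 0 ∨ t = 1) (hv : t = 0 → s ≤ v) (hl : t = 1 → l ≤ s) :
    t * s = max (s + v * t - v) (l * t) := by
  rcases ht with rfl | rfl
  · have hsv := hv rfl
    simp only [zero_mul, mul_zero, add_zero]
    exact (max_eq_right (sub_nonpos.mpr hsv)).symm
  · simp only [one_mul, mul_one, add_sub_cancel_right]
    exact (max_eq_left (hl rfl)).symm

theorem stmt_0_general (n : ℕ) (b : Fin n → Fin n → ℝ)
    (X : Set (Fin n → ℝ)) (hX01 : ∀ x' ∈ X, ∀ j, x' j = 0 ∨ x' j = 1)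
    (x : Fin n → ℝ) (hxX : x ∈ X) (i : Fin n) (v l : ℝ)
    (hv : ∀ x' ∈ X, x' i = 0 → ∑ j ∈ Finset.univ.erase i, b i j * x' j ≤ v)
    (hl : ∀ x' ∈ X, x' i = 1 → l ≤ ∑ j ∈ Finset.univ.erase i, b i j * x' j) :
    x i * (∑ j ∈ Finset.univ.erase i, b i j * x j) =
      max ((∑ j ∈ Finset.univ.erase i, b i j * x j) + v * x i - v) (l * x i) :=
  binary_mul_eq_max (hX01 x hxX i) (hv x hxX) (hl x hxX)

theorem stmt_0 (n : ℕ) (b : Fin n → Fin n → ℝ) (hb : ∀ i j, 0 ≤ b i j)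
    (X : Set (Fin n → ℝ)) (hX01 : ∀ x' ∈ X, ∀ j, x' j = 0 ∨ x' j = 1)
    (x : Fin n → ℝ) (hxX : x ∈ X) (i : Fin n) (v l : ℝ)
    (hv : ∀ x' ∈ X, x' i = 0 → ∑ j ∈ Finset.univ.erase i, b i j * x' j ≤ v)
    (hl : ∀ x' ∈ X, x' i = 1 → l ≤ ∑ j ∈ Finset.univ.erase i, b i j * x' j) :
    x i * (∑ j ∈ Finset.univ.erase i, b i j * x j) =
      max ((∑ j ∈ Finset.univ.erase i, b i j * x j) + v * x i - v) (l * x i) :=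
  stmt_0_general n b X hX01 x hxX i v l hv hl
end

section
/- Equivalence of (P) and (PL1): the infimum over x ∈ X of ∑_i x_i (∑_{j≠i} b i j x_j) + ∑_i c_i x_i equals the infimum over (x,y) with x ∈ X, y_i ≥ ∑_{j≠i} b i j x_j + u_i x_i − u_i, y_i ≥ 0, of ∑_i y_i + ∑_i c_i x_i. -/
/-!
For a binary `t` and `0 ≤ s ≤ u`, the product `t * s` is the least `y ≥ 0` with
`s + u * t - u ≤ y`: at `t = 0` the linear constraint reads `s - u ≤ y` and is implied by `y ≥ 0`,
at `t = 1` it reads `s ≤ y`. Hence every value of (P) is attained in (PL1) with `yᵢ = xᵢ sᵢ(x)`,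
and every value of (PL1) dominates the value of (P) at the same `x`; two sets of reals that
dominate each other in this way have the same infimum.
-/

open Finset

theorem isLeast_linearization_of_binary {t s u : ℝ} (ht : t = 0 ∨ t = 1) (hs : 0 ≤ s)
    (hsu : s ≤ u) : IsLeast {y | s + u * t - u ≤ y ∧ 0 ≤ y} (t * s) := by
  rcases ht with rfl | rfl
  · exact ⟨⟨by linarith, by simp⟩, fun y hy => by simpa using hy.2⟩
  · exact ⟨⟨by simp, by simpa using hs⟩, fun y hy => by simpa using hy.1⟩

theorem stmt_3_general (n : ℕ) (X : Set (Fin n → ℝ))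
    (hX01 : ∀ x ∈ X, ∀ j, x j = 0 ∨ x j = 1)
    (b : Fin n → Fin n → ℝ) (hb : ∀ i j, 0 ≤ b i j) (c u : Fin n → ℝ)
    (hu : ∀ x ∈ X, ∀ i, ∑ j ∈ Finset.univ.erase i, b i j * x j ≤ u i) :
    sInf {q | ∃ x ∈ X,
        q = ∑ i, x i * (∑ j ∈ Finset.univ.erase i, b i j * x j) + ∑ i, c i * x i} =
    sInf {q | ∃ x ∈ X, ∃ y : Fin n → ℝ,
        (∀ i, (∑ j ∈ Finset.univ.erase i, b i j * x j) + u i * x i - u i ≤ y i) ∧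
        (∀ i, 0 ≤ y i) ∧ q = ∑ i, y i + ∑ i, c i * x i} := by
  set s : (Fin n → ℝ) → Fin n → ℝ := fun x i => ∑ j ∈ univ.erase i, b i j * x j
  have hx_nonneg : ∀ x ∈ X, ∀ j, 0 ≤ x j := fun x hx j =>
    (hX01 x hx j).elim (fun h => h ▸ le_rfl) (fun h => h ▸ zero_le_one)
  have hlin : ∀ x ∈ X, ∀ i, IsLeast {y | s x i + u i * x i - u i ≤ y ∧ 0 ≤ y} (x i * s x i) :=
    fun x hx i => isLeast_linearization_of_binary (hX01 x hx i)
      (sum_nonneg fun j _ => mul_nonneg (hb i j) (hx_nonneg x hx j)) (hu x hx i)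
  apply csInf_eq_csInf_of_forall_exists_le
  · rintro _ ⟨x, hx, rfl⟩
    exact ⟨_, ⟨x, hx, fun i => x i * s x i, fun i => (hlin x hx i).1.1,
      fun i => (hlin x hx i).1.2, rfl⟩, le_rfl⟩
  · rintro _ ⟨x, hx, y, hy, hy_nonneg, rfl⟩
    exact ⟨_, ⟨x, hx, rfl⟩,
      add_le_add_left (sum_le_sum fun i _ => (hlin x hx i).2 ⟨hy i, hy_nonneg i⟩) _⟩

theorem stmt_3 (n : ℕ) (X : Set (Fin n → ℝ)) (hXne : X.Nonempty) (hXfin : X.Finite)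
    (hX01 : ∀ x ∈ X, ∀ j, x j = 0 ∨ x j = 1)
    (b : Fin n → Fin n → ℝ) (hb : ∀ i j, 0 ≤ b i j) (c u : Fin n → ℝ)
    (hu : ∀ x ∈ X, ∀ i, ∑ j ∈ Finset.univ.erase i, b i j * x j ≤ u i) :
    sInf {q | ∃ x ∈ X,
        q = ∑ i, x i * (∑ j ∈ Finset.univ.erase i, b i j * x j) + ∑ i, c i * x i} =
    sInf {q | ∃ x ∈ X, ∃ y : Fin n → ℝ,
        (∀ i, (∑ j ∈ Finset.univ.erase i, b i j * x j) + u i * x i - u i ≤ y i) ∧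
        (∀ i, 0 ≤ y i) ∧ q = ∑ i, y i + ∑ i, c i * x i} :=
  stmt_3_general n X hX01 b hb c u hu
end

section
/- Equivalence of (P) and (PL2): the infimum over x ∈ X of ∑_i x_i (∑_{j≠i} b i j x_j) + ∑_i c_i x_i equals the infimum over (x,y) with x ∈ X, y_i ≥ ∑_{j≠i} b i j x_j + v_i x_i − v_i, y_i ≥ l_i x_i, of ∑_i y_i + ∑_i c_i x_i, where v_i (resp. l_i) is the max (resp. min) of ∑_{j≠i} b i j x_j over x ∈ X with x_i = 0 (resp. x_i = 1). -/
/-!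
For binary `x`, the two constraints on `y i` say `y i ≥ S i` when `x i = 1` and `y i ≥ 0` when
`x i = 0` (writing `S i = ∑_{j ≠ i} b i j x_j`); the other constraint is then slack because
`S i ≤ v i` when `x i = 0` and `l i ≤ S i` when `x i = 1`. So the smallest feasible `y i` is exactly
`x i * S i`: every value of (PL2) dominates a value of (P), and every value of (P) is a value of
(PL2), which forces the two infima to agree.
-/

section BinaryLinearization

variable {t s v l : ℝ}

theorem sub_add_mul_le_mul_of_binary (ht : t = 0 ∨ t = 1) (hv : t = 0 → s ≤ v) :
    s + v * t - v ≤ t * s := by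
  rcases ht with rfl | rfl
  · linarith [hv rfl]
  · linarith

theorem mul_le_mul_of_binary (ht : t = 0 ∨ t = 1) (hl : t = 1 → l ≤ s) :
    l * t ≤ t * s := by
  rcases ht with rfl | rfl
  · simp
  · linarith [hl rfl]

theorem mul_le_of_binary {y : ℝ} (ht : t = 0 ∨ t = 1) (hvy : s + v * t - v ≤ y)
    (hly : l * t ≤ y) : t * s ≤ y := by
  rcases ht with rfl | rfl <;> linarith

end BinaryLinearization

theorem stmt_4_general (n : ℕ) (X : Set (Fin n → ℝ))
    (hX01 : ∀ x ∈ X, ∀ j, x j = 0 ∨ x j = 1)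
    (b : Fin n → Fin n → ℝ) (c v l : Fin n → ℝ)
    (hv : ∀ i, IsGreatest
        {s | ∃ x ∈ X, x i = 0 ∧ s = ∑ j ∈ Finset.univ.erase i, b i j * x j} (v i))
    (hl : ∀ i, IsLeast
        {s | ∃ x ∈ X, x i = 1 ∧ s = ∑ j ∈ Finset.univ.erase i, b i j * x j} (l i)) :
    sInf {q | ∃ x ∈ X,
        q = ∑ i, x i * (∑ j ∈ Finset.univ.erase i, b i j * x j) + ∑ i, c i * x i} =
    sInf {q | ∃ x ∈ X, ∃ y : Fin n → ℝ,
        (∀ i, (∑ j ∈ Finset.univ.erase i, b i j * x j) + v i * x i - v i ≤ y i) ∧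
        (∀ i, l i * x i ≤ y i) ∧ q = ∑ i, y i + ∑ i, c i * x i} := by
  apply csInf_eq_csInf_of_forall_exists_le
  · rintro q ⟨x, hx, rfl⟩
    refine ⟨_, ⟨x, hx, fun i => x i * ∑ j ∈ Finset.univ.erase i, b i j * x j,
      fun i => ?_, fun i => ?_, rfl⟩, le_rfl⟩
    · exact sub_add_mul_le_mul_of_binary (hX01 x hx i) fun h0 => (hv i).2 ⟨x, hx, h0, rfl⟩
    · exact mul_le_mul_of_binary (hX01 x hx i) fun h1 => (hl i).2 ⟨x, hx, h1, rfl⟩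
  · rintro q ⟨x, hx, y, hvy, hly, rfl⟩
    have hxy : ∀ i, x i * (∑ j ∈ Finset.univ.erase i, b i j * x j) ≤ y i := fun i =>
      mul_le_of_binary (hX01 x hx i) (hvy i) (hly i)
    exact ⟨_, ⟨x, hx, rfl⟩, add_le_add_left (Finset.sum_le_sum fun i _ => hxy i) _⟩

theorem stmt_4 (n : ℕ) (X : Set (Fin n → ℝ)) (hXne : X.Nonempty) (hXfin : X.Finite)
    (hX01 : ∀ x ∈ X, ∀ j, x j = 0 ∨ x j = 1)
    (b : Fin n → Fin n → ℝ) (hb : ∀ i j, 0 ≤ b i j) (c v l : Fin n → ℝ)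
    (hv : ∀ i, IsGreatest
        {s | ∃ x ∈ X, x i = 0 ∧ s = ∑ j ∈ Finset.univ.erase i, b i j * x j} (v i))
    (hl : ∀ i, IsLeast
        {s | ∃ x ∈ X, x i = 1 ∧ s = ∑ j ∈ Finset.univ.erase i, b i j * x j} (l i)) :
    sInf {q | ∃ x ∈ X,
        q = ∑ i, x i * (∑ j ∈ Finset.univ.erase i, b i j * x j) + ∑ i, c i * x i} =
    sInf {q | ∃ x ∈ X, ∃ y : Fin n → ℝ,
        (∀ i, (∑ j ∈ Finset.univ.erase i, b i j * x j) + v i * x i - v i ≤ y i) ∧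
        (∀ i, l i * x i ≤ y i) ∧ q = ∑ i, y i + ∑ i, c i * x i} :=
  stmt_4_general n X hX01 b c v l hv hl
end

section
/- Feasible region inclusion implying v(R-PL1) ≤ v(R-PL2): if 0 ≤ l_i, v_i ≤ u_i, and x_i ∈ [0,1] for all i, then any (x,y) satisfying y_i ≥ ∑_{j≠i} b i j x_j + v_i x_i − v_i and y_i ≥ l_i x_i for all i also satisfies y_i ≥ ∑_{j≠i} b i j x_j + u_i x_i − u_i and y_i ≥ 0 for all i. Consequently, the infimum of ∑_i y_i + c_i x_i over the PL1 relaxation feasible set is at most the infimum over the PL2 relaxation feasible set. -/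
/-!
On the box `0 ≤ x ≤ 1` the PL1 constraints imply the PL2 ones: since `v ≤ u` and `x - 1 ≤ 0`,
`u x - u = u (x - 1) ≤ v (x - 1)`, and `y ≥ l x ≥ 0`. So the PL1 feasible set lies in the PL2 one,
and the inequality of infima is monotonicity of `sInf`, once we know that the PL2 objective values
are bounded below (by `-∑ |cᵢ|`, as `y ≥ 0` and `x ∈ [0,1]`) and that PL1 is feasible
(`x = 0`, `yᵢ = |vᵢ|`).
-/

open Finset

section OrderedRing

variable {α : Type*} [CommRing α] [LinearOrder α] [IsOrderedRing α]

theorem mul_sub_self_le_mul_sub_self {u v x : α} (hvu : v ≤ u) (hx : x ≤ 1) :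
    u * x - u ≤ v * x - v := by
  have := mul_nonneg (sub_nonneg.2 hvu) (sub_nonneg.2 hx)
  linear_combination this

theorem neg_abs_le_add_mul {c x y : α} (hy : 0 ≤ y) (hx₀ : 0 ≤ x) (hx₁ : x ≤ 1) :
    -|c| ≤ y + c * x := by
  have : |c * x| ≤ |c| := by
    rw [abs_mul, abs_of_nonneg hx₀]
    exact mul_le_of_le_one_right (abs_nonneg c) hx₁
  calc -|c| ≤ -|c * x| := neg_le_neg this
    _ ≤ c * x := neg_abs_le _
    _ ≤ y + c * x := le_add_of_nonneg_left hy

end OrderedRing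

section Relaxations

variable {ι : Type*} [Fintype ι]

theorem pl2_constraints_of_pl1 [DecidableEq ι] (b : ι → ι → ℝ) {u v l : ι → ℝ}
    (hl : ∀ i, 0 ≤ l i) (hvu : ∀ i, v i ≤ u i) (x y : ι → ℝ) (hx : ∀ i, 0 ≤ x i ∧ x i ≤ 1)
    (hv : ∀ i, (∑ j ∈ univ.erase i, b i j * x j) + v i * x i - v i ≤ y i)
    (hly : ∀ i, l i * x i ≤ y i) :
    (∀ i, (∑ j ∈ univ.erase i, b i j * x j) + u i * x i - u i ≤ y i) ∧ (∀ i, 0 ≤ y i) := by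
  refine ⟨fun i => ?_, fun i => (mul_nonneg (hl i) (hx i).1).trans (hly i)⟩
  have := mul_sub_self_le_mul_sub_self (hvu i) (hx i).2
  linarith [hv i]

theorem neg_sum_abs_le_sum_add_mul (c : ι → ℝ) {x y : ι → ℝ} (hx : ∀ i, 0 ≤ x i ∧ x i ≤ 1)
    (hy : ∀ i, 0 ≤ y i) : -∑ i, |c i| ≤ ∑ i, (y i + c i * x i) := by
  rw [← sum_neg_distrib]
  exact sum_le_sum fun i _ => neg_abs_le_add_mul (hy i) (hx i).1 (hx i).2

end Relaxations

theorem stmt_5 (n : ℕ) (b : Fin n → Fin n → ℝ) (c u v l : Fin n → ℝ)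
    (hl : ∀ i, 0 ≤ l i) (hvu : ∀ i, v i ≤ u i) :
    (∀ x y : Fin n → ℝ, (∀ i, 0 ≤ x i ∧ x i ≤ 1) →
      (∀ i, (∑ j ∈ Finset.univ.erase i, b i j * x j) + v i * x i - v i ≤ y i) →
      (∀ i, l i * x i ≤ y i) →
      (∀ i, (∑ j ∈ Finset.univ.erase i, b i j * x j) + u i * x i - u i ≤ y i) ∧
      (∀ i, 0 ≤ y i)) ∧
    sInf {q | ∃ x y : Fin n → ℝ, (∀ i, 0 ≤ x i ∧ x i ≤ 1) ∧
        (∀ i, (∑ j ∈ Finset.univ.erase i, b i j * x j) + u i * x i - u i ≤ y i) ∧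
        (∀ i, 0 ≤ y i) ∧ q = ∑ i, (y i + c i * x i)} ≤
    sInf {q | ∃ x y : Fin n → ℝ, (∀ i, 0 ≤ x i ∧ x i ≤ 1) ∧
        (∀ i, (∑ j ∈ Finset.univ.erase i, b i j * x j) + v i * x i - v i ≤ y i) ∧
        (∀ i, l i * x i ≤ y i) ∧ q = ∑ i, (y i + c i * x i)} := by
  refine ⟨pl2_constraints_of_pl1 b hl hvu, csInf_le_csInf ?bdd ?nonempty ?subset⟩
  case bdd =>
    refine ⟨-∑ i, |c i|, ?_⟩
    rintro q ⟨x, y, hx, -, hy, rfl⟩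
    exact neg_sum_abs_le_sum_add_mul c hx hy
  case nonempty =>
    refine ⟨_, 0, fun i => |v i|, fun _ => ⟨le_rfl, zero_le_one⟩, fun i => ?_, fun i => ?_, rfl⟩
    · simpa using neg_le_abs (v i)
    · simp
  case subset =>
    rintro q ⟨x, y, hx, hv, hly, rfl⟩
    obtain ⟨hu, hy⟩ := pl2_constraints_of_pl1 b hl hvu x y hx hv hly
    exact ⟨x, y, hx, hu, hy, rfl⟩
end

section
/- Validity of the Benders cuts (DL1): for any λ ∈ [0,1]^n and any x ∈ {0,1}^n, the quadratic value z := ∑_i x_i (∑_{j≠i} b i j x_j) satisfies z ≥ ∑_i α_i x_i − β, where α_i := ∑_{j≠i} λ_j b j i + λ_i u_i, β := ∑_i λ_i u_i, and u_i ≥ ∑_{j≠i} b i j x_j. -/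
/-!
Write `s i = ∑_{j ≠ i} b i j x j`. Exchanging the order of summation turns
`∑ i (∑_{j ≠ i} λ j b j i) x i` into `∑ i λ i s i`, so the cut splits into the termwise inequalities
`λ i s i + λ i u i (x i - 1) ≤ x i s i`: for `x i = 1` this is `λ i ≤ 1` with `s i ≥ 0`, and for
`x i = 0` it is `λ i ≥ 0` with `s i ≤ u i`.
-/

open Finset

theorem Finset.sum_sum_erase_comm {ι M : Type*} [Fintype ι] [DecidableEq ι] [AddCommMonoid M]
    (f : ι → ι → M) :
    ∑ i, ∑ j ∈ univ.erase i, f i j = ∑ j, ∑ i ∈ univ.erase j, f i j :=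
  sum_comm' fun i j => by simp [eq_comm, and_comm]

theorem sum_weighted_column_mul_eq {ι : Type*} [Fintype ι] [DecidableEq ι]
    (b : ι → ι → ℝ) (x lam : ι → ℝ) :
    ∑ i, (∑ j ∈ univ.erase i, lam j * b j i) * x i =
      ∑ i, lam i * ∑ j ∈ univ.erase i, b i j * x j := by
  simp only [sum_mul, mul_sum, mul_assoc]
  exact sum_sum_erase_comm fun i j => lam j * (b j i * x i)

theorem benders_term_le {l s u x : ℝ} (hx : x = 0 ∨ x = 1) (hl₀ : 0 ≤ l) (hl₁ : l ≤ 1)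
    (hs : 0 ≤ s) (hsu : s ≤ u) :
    l * s + l * u * x - l * u ≤ x * s := by
  rcases hx with rfl | rfl
  · nlinarith
  · nlinarith

theorem stmt_6 (n : ℕ) (b : Fin n → Fin n → ℝ) (hb : ∀ i j, 0 ≤ b i j)
    (x lam u : Fin n → ℝ) (hx01 : ∀ i, x i = 0 ∨ x i = 1)
    (hlam : ∀ i, 0 ≤ lam i ∧ lam i ≤ 1)
    (hu : ∀ i, ∑ j ∈ Finset.univ.erase i, b i j * x j ≤ u i) :
    ∑ i, (∑ j ∈ Finset.univ.erase i, lam j * b j i + lam i * u i) * x i -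
      ∑ i, lam i * u i ≤
    ∑ i, x i * (∑ j ∈ Finset.univ.erase i, b i j * x j) := by
  have hx_nonneg : ∀ j, 0 ≤ x j := fun j => by rcases hx01 j with h | h <;> simp [h]
  have hrow_nonneg : ∀ i, 0 ≤ ∑ j ∈ univ.erase i, b i j * x j := fun i =>
    sum_nonneg fun j _ => mul_nonneg (hb i j) (hx_nonneg j)
  rw [sum_congr rfl fun i _ => add_mul _ _ (x i), sum_add_distrib, sum_weighted_column_mul_eq,
    ← sum_add_distrib, ← sum_sub_distrib]
  exact sum_le_sum fun i _ =>
    benders_term_le (hx01 i) (hlam i).1 (hlam i).2 (hrow_nonneg i) (hu i)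
end

section
/- Validity of the DL2 cuts: for λ ∈ {0,1}^n (an extreme point) and x ∈ {0,1}^n feasible, ∑_i x_i(∑_{j≠i} b i j x_j) ≥ ∑_i (ᾱ_i + l_i) x_i − β̄ − ∑_i l_i x_i + ∑_i l_i x_i, i.e., ∑_i (x_i ∑_{j≠i} b i j x_j − l_i x_i) ≥ ∑_i ᾱ_i x_i − β̄, where ᾱ_i := ∑_{j≠i} λ_j b j i + λ_i (v_i − l_i) and β̄ := ∑_i λ_i v_i, provided v_i ≥ ∑_{j≠i} b i j x_j whenever x_i = 0 is possible (v_i is a valid bound as in PL2) and l_i x_i ≤ x_i ∑_{j≠i} b i j x_j. -/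
open Finset

theorem sum_mul_sum_erase_comm {ι R : Type*} [Fintype ι] [DecidableEq ι] [CommSemiring R]
    (c x : ι → R) (b : ι → ι → R) :
    ∑ i, (∑ j ∈ univ.erase i, c j * b j i) * x i =
      ∑ i, c i * ∑ j ∈ univ.erase i, b i j * x j := by
  simp_rw [sum_mul, mul_sum, mul_assoc]
  exact sum_comm' (by simp [mem_erase, eq_comm])

theorem dl2_cut_le_of_pl2 {R : Type*} [CommRing R] [LinearOrder R] [IsStrictOrderedRing R]
    {s y v l t : R} (ht₀ : 0 ≤ t) (ht₁ : t ≤ 1) (hv : s + v * y - v ≤ y * s)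
    (hl : l * y ≤ y * s) :
    t * s + t * (v - l) * y - t * v ≤ y * s - l * y := by
  have hv' := mul_le_mul_of_nonneg_left hv ht₀
  have hl' := mul_le_mul_of_nonneg_left hl (sub_nonneg.mpr ht₁)
  linarith

theorem stmt_8_general (n : ℕ) (b : Fin n → Fin n → ℝ)
    (x lam v l : Fin n → ℝ)
    (hlam : ∀ i, 0 ≤ lam i ∧ lam i ≤ 1)
    (hv : ∀ i, (∑ j ∈ Finset.univ.erase i, b i j * x j) + v i * x i - v i ≤
          x i * (∑ j ∈ Finset.univ.erase i, b i j * x j))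
    (hl : ∀ i, l i * x i ≤ x i * (∑ j ∈ Finset.univ.erase i, b i j * x j)) :
    ∑ i, (∑ j ∈ Finset.univ.erase i, lam j * b j i + lam i * (v i - l i)) * x i -
      ∑ i, lam i * v i ≤
    ∑ i, (x i * (∑ j ∈ Finset.univ.erase i, b i j * x j) - l i * x i) := by
  simp_rw [add_mul, sum_add_distrib, sum_mul_sum_erase_comm, ← sum_add_distrib,
    ← sum_sub_distrib]
  exact sum_le_sum fun i _ => dl2_cut_le_of_pl2 (hlam i).1 (hlam i).2 (hv i) (hl i)

theorem stmt_8 (n : ℕ) (b : Fin n → Fin n → ℝ) (hb : ∀ i j, 0 ≤ b i j)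
    (x lam v l : Fin n → ℝ) (hx01 : ∀ i, x i = 0 ∨ x i = 1)
    (hlam : ∀ i, 0 ≤ lam i ∧ lam i ≤ 1)
    (hv : ∀ i, (∑ j ∈ Finset.univ.erase i, b i j * x j) + v i * x i - v i ≤
          x i * (∑ j ∈ Finset.univ.erase i, b i j * x j))
    (hl : ∀ i, l i * x i ≤ x i * (∑ j ∈ Finset.univ.erase i, b i j * x j)) :
    ∑ i, (∑ j ∈ Finset.univ.erase i, lam j * b j i + lam i * (v i - l i)) * x i -
      ∑ i, lam i * v i ≤
    ∑ i, (x i * (∑ j ∈ Finset.univ.erase i, b i j * x j) - l i * x i) :=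
  stmt_8_general n b x lam v l hlam hv hl
end

section
/- Max-formula for the second-stage value: for fixed x ∈ X ⊆ {0,1}^n with u_i ≥ ∑_{j≠i} b i j x_j and b nonnegative, min{∑_i y_i : y_i ≥ ∑_{j≠i} b i j x_j + u_i x_i − u_i, y_i ≥ 0} = ∑_i x_i ∑_{j≠i} b i j x_j, i.e., the inner LP of the Benders decomposition recovers the quadratic term exactly. -/
/-!
The linear program separates over the coordinates, so its value is `∑ᵢ max cᵢ 0` with
`cᵢ = Sᵢ + uᵢxᵢ - uᵢ`, `Sᵢ = ∑_{j ≠ i} bᵢⱼxⱼ ≥ 0`. If `xᵢ = 1` then `cᵢ = Sᵢ ≥ 0`; if `xᵢ = 0`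
then `cᵢ = Sᵢ - uᵢ ≤ 0`. Either way `max cᵢ 0 = xᵢSᵢ`.
-/

open Finset

theorem isLeast_sum_of_ge_of_nonneg {ι : Type*} [Fintype ι] (c : ι → ℝ) :
    IsLeast {s | ∃ y : ι → ℝ, (∀ i, c i ≤ y i) ∧ (∀ i, 0 ≤ y i) ∧ s = ∑ i, y i}
      (∑ i, max (c i) 0) := by
  refine ⟨⟨fun i => max (c i) 0, fun i => le_max_left _ _, fun i => le_max_right _ _, rfl⟩, ?_⟩
  rintro s ⟨y, hcy, hy, rfl⟩
  exact sum_le_sum fun i _ => max_le (hcy i) (hy i)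

theorem max_add_mul_sub_zero_eq_mul {s u t : ℝ} (ht : t = 0 ∨ t = 1) (hs : 0 ≤ s)
    (hsu : s ≤ u) : max (s + u * t - u) 0 = t * s := by
  rcases ht with rfl | rfl
  · simpa using hsu
  · simpa using hs

theorem stmt_19 (n : ℕ) (b : Fin n → Fin n → ℝ) (hb : ∀ i j, 0 ≤ b i j)
    (x u : Fin n → ℝ) (hx01 : ∀ i, x i = 0 ∨ x i = 1)
    (hu : ∀ i, ∑ j ∈ Finset.univ.erase i, b i j * x j ≤ u i) :
    sInf {s | ∃ y : Fin n → ℝ,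
        (∀ i, (∑ j ∈ Finset.univ.erase i, b i j * x j) + u i * x i - u i ≤ y i) ∧
        (∀ i, 0 ≤ y i) ∧ s = ∑ i, y i} =
      ∑ i, x i * (∑ j ∈ Finset.univ.erase i, b i j * x j) := by
  have hx : ∀ j, 0 ≤ x j := fun j => by rcases hx01 j with h | h <;> simp [h]
  rw [(isLeast_sum_of_ge_of_nonneg _).csInf_eq]
  refine sum_congr rfl fun i _ => max_add_mul_sub_zero_eq_mul (hx01 i) ?_ (hu i)
  exact sum_nonneg fun j _ => mul_nonneg (hb i j) (hx j)
end
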